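/- arXiv:0909.2201 — 9 statements merged into one kernel-verified Lean document; each statement's English description precedes it below -/
import Mathlib

section
/- Let A and B be d×d complex matrices with AB = 0. Writing the characteristic polynomial of a d×d matrix M as χ_M(t) = det(M − t·I) = t^d + c_1(M) t^{d−1} + ⋯ + c_d(M), one has c_i(A) · c_j(B) = 0 whenever i + j > d. -/
/-!
The kernel of `M` lies in the generalized `0`-eigenspace, whose dimension is the trailing degree
of `χ_M`; hence `t^(d - rank M)` divides `χ_M` and `c_k(M) = 0` for `k > rank M`. Since `AB = 0`
forces `rank A + rank B ≤ d`, for `i + j > d` either `i > rank A` or `j > rank B`.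
-/

open Polynomial Matrix

/-- For a `d × d` complex matrix `M`, the coefficient `c_k(M)` defined by the expansion
`χ_M(t) = det (M - t • 1) = t^d + c_1(M) t^(d-1) + ⋯ + c_d(M)`;
that is, `c_k(M)` is the coefficient of `t^(d-k)` in `det (M - t • 1)`. -/
noncomputable def charCoeff (d : ℕ) (M : Matrix (Fin d) (Fin d) ℂ) (k : ℕ) : ℂ :=
  (Matrix.det (M.map Polynomial.C - (Polynomial.X : Polynomial ℂ) • 1)).coeff (d - k)

namespace Matrix

variable {K n : Type*} [Field K] [Fintype n] [DecidableEq n]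

theorem card_sub_rank_le_natTrailingDegree_charpoly (M : Matrix n n K) :
    Fintype.card n - M.rank ≤ M.charpoly.natTrailingDegree := by
  have hker : LinearMap.ker M.toLin' ≤ Module.End.maxGenEigenspace M.toLin' 0 := fun x hx ↦
    (Module.End.mem_maxGenEigenspace _ _ _).2 ⟨1, by simpa using hx⟩
  have hrank : M.rank + Module.finrank K (LinearMap.ker M.toLin') = Fintype.card n := by
    rw [rank, toLin'_apply', LinearMap.finrank_range_add_finrank_ker,
      Module.finrank_fintype_fun_eq_card]
  rw [← charpoly_toLin', ← LinearMap.finrank_maxGenEigenspace_zero_eq]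
  have := Submodule.finrank_mono hker
  omega

theorem coeff_charpoly_eq_zero_of_lt_card_sub_rank (M : Matrix n n K) {k : ℕ}
    (hk : k < Fintype.card n - M.rank) : M.charpoly.coeff k = 0 :=
  coeff_eq_zero_of_lt_natTrailingDegree <|
    hk.trans_le M.card_sub_rank_le_natTrailingDegree_charpoly

end Matrix

theorem charCoeff_eq_neg_one_pow_mul_coeff_charpoly (d : ℕ) (M : Matrix (Fin d) (Fin d) ℂ)
    (k : ℕ) : charCoeff d M k = (-1) ^ d * M.charpoly.coeff (d - k) := by
  have h : M.map C - (X : ℂ[X]) • 1 = -M.charmatrix := by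
    rw [charmatrix, neg_sub, smul_one_eq_diagonal]
    rfl
  rw [charCoeff, h, det_neg, charpoly, Fintype.card_fin, ← C_1, ← C_neg, ← C_pow, coeff_C_mul]

theorem charCoeff_eq_zero_of_rank_lt (d : ℕ) (M : Matrix (Fin d) (Fin d) ℂ) {k : ℕ}
    (hk : k ≤ d) (hrank : M.rank < k) : charCoeff d M k = 0 := by
  rw [charCoeff_eq_neg_one_pow_mul_coeff_charpoly,
    M.coeff_charpoly_eq_zero_of_lt_card_sub_rank (by rw [Fintype.card_fin]; omega), mul_zero]

/-- If `A`, `B` are `d × d` complex matrices with `A * B = 0`, then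
`c_i(A) * c_j(B) = 0` whenever `i + j > d`. -/
theorem charCoeff_mul_charCoeff_eq_zero
    (d : ℕ) (A B : Matrix (Fin d) (Fin d) ℂ) (hAB : A * B = 0)
    (i j : ℕ) (hi : i ≤ d) (hj : j ≤ d) (hij : d < i + j) :
    charCoeff d A i * charCoeff d B j = 0 := by
  have hrank : A.rank + B.rank ≤ d := by
    simpa using rank_add_rank_le_card_of_mul_eq_zero hAB
  rcases lt_or_ge A.rank i with hA | hA
  · rw [charCoeff_eq_zero_of_rank_lt d A hi hA, zero_mul]
  · rw [charCoeff_eq_zero_of_rank_lt d B hj (by omega), mul_zero]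
end

section
/- Suppose dim P = 2 and dim R = k. Then every abelian subspace E ⊆ Hom(P,R) satisfies dim E ≤ k, and there exists an abelian subspace of dimension exactly k; thus the maximal dimension of an abelian subspace of Hom(P,R) is k. -/
/-!
If `u, u'` span `P` and `E` is abelian, the maps in `E` killing `u` are determined by their
value at `u'`, and these values are `Q`-orthogonal to `E(u)`. Hence
`dim E = dim E(u) + dim ker ≤ dim E(u) + (k - dim E(u)) = k`.
Conversely, for any nonzero functional `φ` on `P` the rank-one maps `u ↦ φ u • r` form an
abelian subspace isomorphic to `R`.
-/

open Module

/-- A linear subspace `E ⊆ Hom(P,R)` is *abelian* (with respect to a bilinear form `Q` on `R`)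
if `Q(A u, B u') = Q(B u, A u')` for all `A, B ∈ E` and all `u, u' ∈ P`. -/
def IsAbelianSubspace {P R : Type*} [AddCommGroup P] [Module ℂ P]
    [AddCommGroup R] [Module ℂ R] (Q : R →ₗ[ℂ] R →ₗ[ℂ] ℂ)
    (E : Submodule ℂ (P →ₗ[ℂ] R)) : Prop :=
  ∀ A ∈ E, ∀ B ∈ E, ∀ u u' : P, Q (A u) (B u') = Q (B u) (A u')

section

variable {P R : Type*} [AddCommGroup P] [Module ℂ P] [AddCommGroup R] [Module ℂ R]
  {Q : R →ₗ[ℂ] R →ₗ[ℂ] ℂ}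

theorem IsAbelianSubspace.apply_mem_orthogonal_map_applyₗ {E : Submodule ℂ (P →ₗ[ℂ] R)}
    (hE : IsAbelianSubspace Q E) (u u' : P) {A : P →ₗ[ℂ] R} (hA : A ∈ E) (hAu : A u = 0) :
    A u' ∈ LinearMap.BilinForm.orthogonal Q (E.map (LinearMap.applyₗ u)) := by
  rintro _ ⟨B, hB, rfl⟩
  change Q (B u) (A u') = 0
  rw [hE B hB A hA, hAu, map_zero, LinearMap.zero_apply]

theorem IsAbelianSubspace.finrank_le [FiniteDimensional ℂ P] [FiniteDimensional ℂ R]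
    (hQ : LinearMap.BilinForm.Nondegenerate Q) {E : Submodule ℂ (P →ₗ[ℂ] R)}
    (hE : IsAbelianSubspace Q E) {u u' : P} (hspan : Submodule.span ℂ {u, u'} = ⊤) :
    finrank ℂ E ≤ finrank ℂ R := by
  set evalU : E →ₗ[ℂ] R := (LinearMap.applyₗ u).domRestrict E
  set evalU' : LinearMap.ker evalU →ₗ[ℂ] R :=
    ((LinearMap.applyₗ u').domRestrict E).domRestrict (LinearMap.ker evalU)
  have hrange : LinearMap.range evalU = E.map (LinearMap.applyₗ u) :=
    LinearMap.range_domRestrict _ _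
  have hinj : Function.Injective evalU' := by
    rintro ⟨⟨A, hA⟩, hAu : A u = 0⟩ ⟨⟨B, hB⟩, hBu : B u = 0⟩ (hAB : A u' = B u')
    obtain rfl : A = B := LinearMap.ext_on hspan <| by
      rintro v (rfl | rfl)
      exacts [hAu.trans hBu.symm, hAB]
    rfl
  have hmaps : LinearMap.range evalU' ≤
      LinearMap.BilinForm.orthogonal Q (LinearMap.range evalU) := by
    rintro _ ⟨⟨⟨A, hA⟩, hAu⟩, rfl⟩
    rw [hrange]
    exact hE.apply_mem_orthogonal_map_applyₗ u u' hA hAu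
  calc finrank ℂ E
      = finrank ℂ (LinearMap.range evalU) + finrank ℂ (LinearMap.ker evalU) :=
        (LinearMap.finrank_range_add_finrank_ker evalU).symm
    _ ≤ finrank ℂ (LinearMap.range evalU) +
          finrank ℂ (LinearMap.BilinForm.orthogonal Q (LinearMap.range evalU)) := by
        rw [← LinearMap.finrank_range_of_inj hinj]
        gcongr
        exact Submodule.finrank_mono hmaps
    _ = finrank ℂ R := by
        rw [LinearMap.BilinForm.finrank_orthogonal hQ]
        have := Submodule.finrank_le (LinearMap.range evalU)
        omega

theorem isAbelianSubspace_range_smulRightₗ (hsym : ∀ x y, Q x y = Q y x) (φ : P →ₗ[ℂ] ℂ) :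
    IsAbelianSubspace Q (LinearMap.range (LinearMap.smulRightₗ φ : R →ₗ[ℂ] P →ₗ[ℂ] R)) := by
  rintro _ ⟨r, rfl⟩ _ ⟨s, rfl⟩ u u'
  simp only [LinearMap.smulRightₗ_apply_apply, map_smul, LinearMap.smul_apply, smul_eq_mul]
  rw [hsym r s]

theorem finrank_range_smulRightₗ {φ : P →ₗ[ℂ] ℂ} (hφ : φ ≠ 0) :
    finrank ℂ (LinearMap.range (LinearMap.smulRightₗ φ : R →ₗ[ℂ] P →ₗ[ℂ] R)) = finrank ℂ R := by
  refine LinearMap.finrank_range_of_inj fun r s hrs => ?_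
  obtain ⟨v, hv⟩ : ∃ v, φ v ≠ 0 := by
    by_contra! h
    exact hφ (LinearMap.ext h)
  exact smul_right_injective R hv (LinearMap.congr_fun hrs v)

end

/-- If `dim P = 2` and `dim R = k`, then every abelian subspace of `Hom(P,R)` has
dimension at most `k`, and there is an abelian subspace of dimension exactly `k`;
thus the maximal dimension of an abelian subspace of `Hom(P,R)` is `k`. -/
theorem abelian_dim_le_of_rank_two {P R : Type*}
    [AddCommGroup P] [Module ℂ P] [FiniteDimensional ℂ P]
    [AddCommGroup R] [Module ℂ R] [FiniteDimensional ℂ R]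
    (k : ℕ) (hP : finrank ℂ P = 2) (hR : finrank ℂ R = k)
    (Q : R →ₗ[ℂ] R →ₗ[ℂ] ℂ)
    (hsym : ∀ x y, Q x y = Q y x)
    (hnd : ∀ x, (∀ y, Q x y = 0) → x = 0) :
    (∀ E : Submodule ℂ (P →ₗ[ℂ] R), IsAbelianSubspace Q E → finrank ℂ ↥E ≤ k) ∧
      (∃ E : Submodule ℂ (P →ₗ[ℂ] R), IsAbelianSubspace Q E ∧ finrank ℂ ↥E = k) := by
  subst hR
  let b : Basis (Fin 2) ℂ P := finBasisOfFinrankEq ℂ P hP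
  have hspan : Submodule.span ℂ {b 0, b 1} = ⊤ := by
    rw [← b.span_eq, Fin.range_fin_succ, Set.range_unique]
    rfl
  have hQ : LinearMap.BilinForm.Nondegenerate Q :=
    (LinearMap.IsRefl.nondegenerate_iff_separatingLeft fun x y h => by rwa [hsym]).mpr hnd
  have hφ : b.coord 0 ≠ 0 := fun h => by simpa using LinearMap.congr_fun h (b 0)
  exact ⟨fun E hE => hE.finrank_le hQ hspan,
    _, isAbelianSubspace_range_smulRightₗ hsym _, finrank_range_smulRightₗ hφ⟩
end

section
/- Suppose dim P = 3 and dim R = k. Then every abelian subspace E ⊆ Hom(P,R) satisfies 2 · dim E ≤ 3k, i.e. dim E ≤ 3k/2. -/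
/-!
Filter `E` by vanishing at the vectors `u, v, w` of a basis of `P`: let `V₁ = E(u)`,
`V₂ = E₁(v)` and `V₃ = E₂(w)`, where `E₁ ⊆ E` is the subspace vanishing at `u` and `E₂ ⊆ E₁` the
one vanishing at `v`. Then `dim E = dim V₁ + dim V₂ + dim V₃`, and the abelian condition
`Q(B u, A v) = Q(A u, B v) = 0` for `A ∈ E₁`, `B ∈ E` makes `V₂ ⊥ V₁` and `V₃ ⊥ V₁ + V₂`.
Nondegeneracy of `Q` gives `dim V₁ + dim V₂ ≤ k` and `dim (V₁ + V₂) + dim V₃ ≤ k`, so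
`dim E ≤ k + dim (V₁ ∩ V₂) ≤ k + (dim V₁ + dim V₂) / 2 ≤ 3k/2`.
-/

open Module

open LinearMap Submodule

theorem Submodule.finrank_map_add_finrank_inf_ker {K M N : Type*} [DivisionRing K]
    [AddCommGroup M] [Module K M] [AddCommGroup N] [Module K N]
    (f : M →ₗ[K] N) (p : Submodule K M) [FiniteDimensional K p] :
    finrank K (p.map f) + finrank K ↥(p ⊓ ker f) = finrank K p := by
  rw [← range_domRestrict, ← map_comap_subtype, finrank_map_subtype_eq, ← ker_domRestrict]
  exact finrank_range_add_finrank_ker _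

namespace LinearMap.BilinForm

variable {K M : Type*} [Field K] [AddCommGroup M] [Module K M] {B : LinearMap.BilinForm K M}

theorem orthogonal_sup (V₁ V₂ : Submodule K M) :
    B.orthogonal (V₁ ⊔ V₂) = B.orthogonal V₁ ⊓ B.orthogonal V₂ := by
  refine le_antisymm (le_inf (orthogonal_le le_sup_left) (orthogonal_le le_sup_right)) ?_
  rintro y ⟨hy₁, hy₂⟩ x hx
  obtain ⟨x₁, hx₁, x₂, hx₂, rfl⟩ := mem_sup.mp hx
  simp [hy₁ x₁ hx₁, hy₂ x₂ hx₂]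

theorem finrank_add_finrank_le_of_le_orthogonal [FiniteDimensional K M] (hB : B.SeparatingLeft)
    {V W : Submodule K M} (hW : W ≤ B.orthogonal V) :
    finrank K V + finrank K W ≤ finrank K M := by
  have := finrank_add_finrank_orthogonal' (B := B) V
  rw [separatingLeft_iff_ker_eq_bot.mp hB, inf_bot_eq, finrank_bot, add_zero] at this
  exact this ▸ Nat.add_le_add_left (finrank_mono hW) _

end LinearMap.BilinForm

namespace IsAbelianSubspace

variable {P R : Type*} [AddCommGroup P] [Module ℂ P] [AddCommGroup R] [Module ℂ R]
  {Q : R →ₗ[ℂ] R →ₗ[ℂ] ℂ} {E F : Submodule ℂ (P →ₗ[ℂ] R)}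

theorem mono (hE : IsAbelianSubspace Q E) (hF : F ≤ E) : IsAbelianSubspace Q F :=
  fun A hA B hB => hE A (hF hA) B (hF hB)

theorem map_inf_ker_le_orthogonal (hE : IsAbelianSubspace Q E) (u v : P) :
    (E ⊓ ker (applyₗ u)).map (applyₗ v) ≤ BilinForm.orthogonal Q (E.map (applyₗ u)) := by
  rintro _ ⟨A, ⟨hA, hAu⟩, rfl⟩ _ ⟨B, hB, rfl⟩
  change Q (B u) (A v) = 0
  rw [hE B hB A hA, show A u = 0 from hAu, map_zero, LinearMap.zero_apply]

theorem two_mul_finrank_le_of_inf_ker_eq_bot [FiniteDimensional ℂ P] [FiniteDimensional ℂ R]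
    (hE : IsAbelianSubspace Q E) (hQ : Q.SeparatingLeft) (u v w : P)
    (h : E ⊓ ker (applyₗ u) ⊓ ker (applyₗ v) ⊓ ker (applyₗ w) = ⊥) :
    2 * finrank ℂ E ≤ 3 * finrank ℂ R := by
  have hE₀ := finrank_map_add_finrank_inf_ker (applyₗ u) E
  set E₁ := E ⊓ ker (applyₗ u : (P →ₗ[ℂ] R) →ₗ[ℂ] R)
  have hE₁ := finrank_map_add_finrank_inf_ker (applyₗ v) E₁
  set E₂ := E₁ ⊓ ker (applyₗ v : (P →ₗ[ℂ] R) →ₗ[ℂ] R)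
  have hE₂ := finrank_map_add_finrank_inf_ker (applyₗ w) E₂
  set V₁ := E.map (applyₗ u : (P →ₗ[ℂ] R) →ₗ[ℂ] R)
  set V₂ := E₁.map (applyₗ v : (P →ₗ[ℂ] R) →ₗ[ℂ] R)
  set V₃ := E₂.map (applyₗ w : (P →ₗ[ℂ] R) →ₗ[ℂ] R)
  rw [h, finrank_bot] at hE₂
  have h₁₂ : finrank ℂ V₁ + finrank ℂ V₂ ≤ finrank ℂ R :=
    BilinForm.finrank_add_finrank_le_of_le_orthogonal hQ (hE.map_inf_ker_le_orthogonal u v)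
  have h₃ : finrank ℂ ↥(V₁ ⊔ V₂) + finrank ℂ V₃ ≤ finrank ℂ R := by
    refine BilinForm.finrank_add_finrank_le_of_le_orthogonal hQ ?_
    rw [BilinForm.orthogonal_sup]
    exact le_inf ((map_mono inf_le_left).trans (hE.map_inf_ker_le_orthogonal u w))
      ((hE.mono inf_le_left).map_inf_ker_le_orthogonal v w)
  have hsup := finrank_sup_add_finrank_inf_eq V₁ V₂
  have hinf₁ := finrank_mono (inf_le_left : V₁ ⊓ V₂ ≤ V₁)
  have hinf₂ := finrank_mono (inf_le_right : V₁ ⊓ V₂ ≤ V₂)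
  omega

end IsAbelianSubspace

theorem abelian_dim_le_of_rank_three_general {P R : Type*}
    [AddCommGroup P] [Module ℂ P] [FiniteDimensional ℂ P]
    [AddCommGroup R] [Module ℂ R] [FiniteDimensional ℂ R]
    (k : ℕ) (hP : finrank ℂ P = 3) (hR : finrank ℂ R = k)
    (Q : R →ₗ[ℂ] R →ₗ[ℂ] ℂ)
    (hnd : ∀ x, (∀ y, Q x y = 0) → x = 0)
    (E : Submodule ℂ (P →ₗ[ℂ] R)) (hE : IsAbelianSubspace Q E) :
    2 * finrank ℂ ↥E ≤ 3 * k := by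
  let b : Basis (Fin 3) ℂ P := finBasisOfFinrankEq ℂ P hP
  refine hR ▸ hE.two_mul_finrank_le_of_inf_ker_eq_bot hnd (b 0) (b 1) (b 2) ?_
  refine eq_bot_iff.mpr fun A ⟨⟨⟨_, h₀⟩, h₁⟩, h₂⟩ => b.ext fun i => ?_
  fin_cases i
  exacts [h₀, h₁, h₂]

/-- If `dim P = 3` and `dim R = k`, then every abelian subspace `E ⊆ Hom(P,R)` satisfies
`2 * dim E ≤ 3 * k`, i.e. `dim E ≤ 3k/2`. -/
theorem abelian_dim_le_of_rank_three {P R : Type*}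
    [AddCommGroup P] [Module ℂ P] [FiniteDimensional ℂ P]
    [AddCommGroup R] [Module ℂ R] [FiniteDimensional ℂ R]
    (k : ℕ) (hP : finrank ℂ P = 3) (hR : finrank ℂ R = k)
    (Q : R →ₗ[ℂ] R →ₗ[ℂ] ℂ)
    (hsym : ∀ x y, Q x y = Q y x)
    (hnd : ∀ x, (∀ y, Q x y = 0) → x = 0)
    (E : Submodule ℂ (P →ₗ[ℂ] R)) (hE : IsAbelianSubspace Q E) :
    2 * finrank ℂ ↥E ≤ 3 * k :=
  abelian_dim_le_of_rank_three_general k hP hR Q hnd E hE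
end

section
/- Suppose dim P = 3 and dim R = 2s for some positive integer s. Then there exists an abelian subspace E ⊆ Hom(P,R) with dim E = 3s; hence the bound dim E ≤ (3/2)·dim R is sharp when dim R is even. -/
open Module

/-!
Diagonalise `Q` and pair up the `2s` orthogonal basis vectors: since every complex number has a
square root, `b₁ + c • b₂` is isotropic for a suitable `c`, and the `s` vectors so obtained span a
totally isotropic subspace `W` of dimension `s`. For maps `A, B : P → W` both sides of the
abelian condition vanish, so `Hom(P, W) ⊆ Hom(P, R)` is abelian, of dimension `3s`.
-/

open LinearMap (BilinForm)

def IsTotallyIsotropic {K V : Type*} [CommSemiring K] [AddCommMonoid V] [Module K V]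
    (B : BilinForm K V) (W : Submodule K V) : Prop :=
  ∀ x ∈ W, ∀ y ∈ W, B x y = 0

section Isotropic

variable {K V : Type*} [Field K] [AddCommGroup V] [Module K V] {B : BilinForm K V}

theorem isTotallyIsotropic_span_range {ι : Type*} {f : ι → V}
    (hf : ∀ i j, B (f i) (f j) = 0) : IsTotallyIsotropic B (Submodule.span K (Set.range f)) := by
  have hleft : ∀ i, ∀ y ∈ Submodule.span K (Set.range f), B (f i) y = 0 := fun i y hy =>
    (Submodule.span_le (p := LinearMap.ker (B (f i)))).mpr
      (by rintro _ ⟨j, rfl⟩; exact hf i j) hy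
  intro x hx y hy
  exact (Submodule.span_le (p := LinearMap.ker (B.flip y))).mpr
    (by rintro _ ⟨i, rfl⟩; exact hleft i y hy) hx

theorem exists_isotropic_add_smul [IsAlgClosed K] {u v : V} (huv : B u v = 0) (hvu : B v u = 0)
    (hv : B v v ≠ 0) : ∃ c : K, B (u + c • v) (u + c • v) = 0 := by
  obtain ⟨c, hc⟩ := IsAlgClosed.exists_pow_nat_eq (-B u u / B v v) two_pos
  refine ⟨c, ?_⟩
  have hc' : c ^ 2 * B v v = -B u u := by rw [hc, div_mul_cancel₀ _ hv]
  simp only [map_add, map_smul, LinearMap.add_apply, LinearMap.smul_apply, smul_eq_mul, huv, hvu]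
  linear_combination hc'

theorem linearIndependent_inl_add_smul_inr {κ : Type*} [Fintype κ] {w : κ ⊕ κ → V}
    (hw : LinearIndependent K w) (c : κ → K) :
    LinearIndependent K fun j => w (.inl j) + c j • w (.inr j) := by
  rw [Fintype.linearIndependent_iff] at hw ⊢
  intro g hg j
  refine hw (Sum.elim g fun j => g j * c j) ?_ (.inl j)
  simpa [Fintype.sum_sum_type, smul_add, mul_smul, Finset.sum_add_distrib] using hg

theorem exists_isTotallyIsotropic_of_isOrthoᵢ [IsAlgClosed K] {κ : Type*} [Fintype κ]
    {w : κ ⊕ κ → V} (hw : LinearIndependent K w) (ho : B.IsOrthoᵢ w)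
    (hne : ∀ j, B (w (.inr j)) (w (.inr j)) ≠ 0) :
    ∃ W : Submodule K V, IsTotallyIsotropic B W ∧ finrank K W = Fintype.card κ := by
  choose c hc using fun j =>
    exists_isotropic_add_smul (ho (Sum.inl_ne_inr (b := j))) (ho Sum.inr_ne_inl) (hne j)
  refine ⟨_, isTotallyIsotropic_span_range fun j k => ?_,
    finrank_span_eq_card (linearIndependent_inl_add_smul_inr hw c)⟩
  rcases eq_or_ne j k with rfl | hjk
  · exact hc j
  · simp only [map_add, map_smul, LinearMap.add_apply, LinearMap.smul_apply,
      ho (Sum.inl_injective.ne hjk), ho (Sum.inr_injective.ne hjk), ho Sum.inl_ne_inr,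
      ho Sum.inr_ne_inl, smul_zero, add_zero]

theorem exists_isTotallyIsotropic_finrank_eq [IsAlgClosed K] [Invertible (2 : K)]
    [FiniteDimensional K V] (hB : LinearMap.IsSymm B) (hB' : B.SeparatingLeft) {s : ℕ}
    (hs : 2 * s ≤ finrank K V) : ∃ W : Submodule K V, IsTotallyIsotropic B W ∧ finrank K W = s := by
  obtain ⟨v, hv⟩ := LinearMap.BilinForm.exists_orthogonal_basis hB
  let e : Fin s ⊕ Fin s ↪ Fin (finrank K V) :=
    (finSumFinEquiv.trans (finCongr (two_mul s).symm)).toEmbedding.trans (Fin.castLEEmb hs)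
  obtain ⟨W, hW, hWs⟩ := exists_isTotallyIsotropic_of_isOrthoᵢ (w := v ∘ e)
    (v.linearIndependent.comp e e.injective) (fun _ _ hij => hv (e.injective.ne hij))
    (fun _ => hv.not_isOrtho_basis_self_of_separatingLeft hB' _)
  exact ⟨W, hW, by simpa using hWs⟩

end Isotropic

theorem finrank_range_compRight_subtype {K P V : Type*} [Field K] [AddCommGroup P] [Module K P]
    [FiniteDimensional K P] [AddCommGroup V] [Module K V] [FiniteDimensional K V]
    (W : Submodule K V) :
    finrank K (LinearMap.range (LinearMap.compRight K W.subtype (M := P))) =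
      finrank K P * finrank K W := by
  rw [LinearMap.finrank_range_of_inj, finrank_linearMap]
  exact fun A B h => LinearMap.ext fun u => Subtype.ext (LinearMap.congr_fun h u)

theorem IsTotallyIsotropic.isAbelianSubspace_range_compRight {P R : Type*} [AddCommGroup P]
    [Module ℂ P] [AddCommGroup R] [Module ℂ R] {Q : R →ₗ[ℂ] R →ₗ[ℂ] ℂ} {W : Submodule ℂ R}
    (hW : IsTotallyIsotropic Q W) :
    IsAbelianSubspace Q (LinearMap.range (LinearMap.compRight ℂ W.subtype (M := P))) := by
  rintro _ ⟨A, rfl⟩ _ ⟨B, rfl⟩ u u'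
  simp only [LinearMap.compRight_apply, LinearMap.comp_apply, Submodule.subtype_apply]
  rw [hW _ (A u).2 _ (B u').2, hW _ (B u).2 _ (A u').2]

theorem abelian_dim_sharp_of_rank_three_even_general {P R : Type*}
    [AddCommGroup P] [Module ℂ P] [FiniteDimensional ℂ P]
    [AddCommGroup R] [Module ℂ R] [FiniteDimensional ℂ R]
    (s : ℕ) (hP : finrank ℂ P = 3) (hR : finrank ℂ R = 2 * s)
    (Q : R →ₗ[ℂ] R →ₗ[ℂ] ℂ)
    (hsym : ∀ x y, Q x y = Q y x)
    (hnd : ∀ x, (∀ y, Q x y = 0) → x = 0) :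
    ∃ E : Submodule ℂ (P →ₗ[ℂ] R), IsAbelianSubspace Q E ∧ finrank ℂ ↥E = 3 * s := by
  obtain ⟨W, hW, hWs⟩ :=
    exists_isTotallyIsotropic_finrank_eq (B := Q) ⟨hsym⟩ hnd hR.ge
  exact ⟨_, hW.isAbelianSubspace_range_compRight,
    by rw [finrank_range_compRight_subtype, hP, hWs]⟩

/-- If `dim P = 3` and `dim R = 2s` with `s > 0`, then there is an abelian subspace
`E ⊆ Hom(P,R)` with `dim E = 3s`; hence the bound `dim E ≤ (3/2) dim R` is sharp when
`dim R` is even. -/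
theorem abelian_dim_sharp_of_rank_three_even {P R : Type*}
    [AddCommGroup P] [Module ℂ P] [FiniteDimensional ℂ P]
    [AddCommGroup R] [Module ℂ R] [FiniteDimensional ℂ R]
    (s : ℕ) (hs : 0 < s) (hP : finrank ℂ P = 3) (hR : finrank ℂ R = 2 * s)
    (Q : R →ₗ[ℂ] R →ₗ[ℂ] ℂ)
    (hsym : ∀ x y, Q x y = Q y x)
    (hnd : ∀ x, (∀ y, Q x y = 0) → x = 0) :
    ∃ E : Submodule ℂ (P →ₗ[ℂ] R), IsAbelianSubspace Q E ∧ finrank ℂ ↥E = 3 * s :=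
  abelian_dim_sharp_of_rank_three_even_general s hP hR Q hsym hnd
end

section
/- Let P = ℂ³ with standard basis e₁, e₂, e₃ and R = ℂ^h with standard basis f₁, …, f_h and the standard symmetric bilinear form Q(x,y) = Σ x_α y_α. Let λ₁, …, λ_h be nonzero and pairwise distinct complex numbers and μ₁, …, μ_h complex numbers, and for each α define v_α ∈ Hom(P,R) by v_α(e₁) = f_α, v_α(e₂) = λ_α f_α, v_α(e₃) = μ_α f_α. Then E = span{v₁, …, v_h} is an h-dimensional abelian subspace of Hom(P,R), and it is a maximal abelian subspace: any w ∈ Hom(P,R) such that span(E ∪ {w}) is abelian already lies in E. -/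
/-! Each `v_α` takes values in the line `ℂ f_α` and sends `e₁` to `f_α`. Hence a map `A` lies in
`E` iff `A(u)_α = A(e₁)_α · v_α(u)_α` for all `u` and `α`, and any two such maps satisfy the
abelian identity because `Q` is diagonal in the basis `f_α`. Conversely, the abelian identity for
`w` and `v_α` at `u' = e₁` reads `w(u)_α = w(e₁)_α · v_α(u)_α`, which puts `w` in `E`; the
`v_α` are independent because their values at `e₁` are. -/

open Module

/-- The standard symmetric bilinear form `Q(x,y) = ∑ x α * y α` on `ℂ^h`. -/
noncomputable def stdQ (h : ℕ) : (Fin h → ℂ) →ₗ[ℂ] (Fin h → ℂ) →ₗ[ℂ] ℂ :=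
  LinearMap.mk₂ ℂ (fun x y => ∑ α, x α * y α)
    (fun x x' y => by simp [add_mul, Finset.sum_add_distrib])
    (fun c x y => by simp [Finset.mul_sum, mul_assoc])
    (fun x y y' => by simp [mul_add, Finset.sum_add_distrib])
    (fun c x y => by
      simp only [Pi.smul_apply, smul_eq_mul, Finset.mul_sum]
      exact Finset.sum_congr rfl fun i _ => by ring)

section DiagonalFamily

variable {K ι P : Type*} [CommSemiring K] [Fintype ι] [DecidableEq ι]
  [AddCommMonoid P] [Module K P] {v : ι → P →ₗ[K] ι → K} {e : P}

theorem linearIndependent_of_apply_eq_single (hve : ∀ α, v α e = Pi.single α 1) :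
    LinearIndependent K v := by
  apply LinearIndependent.of_comp (LinearMap.applyₗ e)
  convert (Pi.basisFun K ι).linearIndependent
  ext α : 1
  simp [hve]

theorem mem_span_range_iff_apply_eq_mul (hve : ∀ α, v α e = Pi.single α 1)
    (hdiag : ∀ α β u, β ≠ α → v α u β = 0) {A : P →ₗ[K] ι → K} :
    A ∈ Submodule.span K (Set.range v) ↔ ∀ u α, A u α = A e α * v α u α := by
  constructor
  · intro hA
    induction hA using Submodule.span_induction with
    | mem A hA =>
      obtain ⟨β, rfl⟩ := hA
      intro u α
      rcases eq_or_ne α β with rfl | hne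
      · simp [hve]
      · simp [hdiag β α u hne, hve, Pi.single_eq_of_ne hne]
    | zero => simp
    | add A B _ _ hA hB => intro u α; simp [hA u α, hB u α, add_mul]
    | smul c A _ hA => intro u α; simp [hA u α, mul_assoc]
  · intro hA
    have hsum : A = ∑ α, A e α • v α := by
      ext u β
      simp only [LinearMap.sum_apply, LinearMap.smul_apply, Finset.sum_apply, Pi.smul_apply,
        smul_eq_mul]
      rw [Finset.sum_eq_single β (fun α _ hne => by simp [hdiag α β u hne.symm]) (by simp),
        hA u β]
    rw [hsum]
    exact Submodule.sum_mem _ fun α _ =>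
      Submodule.smul_mem _ _ (Submodule.subset_span (Set.mem_range_self α))

end DiagonalFamily

theorem stdQ_apply {h : ℕ} (x y : Fin h → ℂ) : stdQ h x y = ∑ α, x α * y α := by
  simp [stdQ]

section AbelianSpan

variable {P : Type*} [AddCommGroup P] [Module ℂ P] {h : ℕ}
  {v : Fin h → P →ₗ[ℂ] Fin h → ℂ} {e : P}

theorem isAbelianSubspace_span_range (hve : ∀ α, v α e = Pi.single α 1)
    (hdiag : ∀ α β u, β ≠ α → v α u β = 0) :
    IsAbelianSubspace (stdQ h) (Submodule.span ℂ (Set.range v)) := by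
  intro A hA B hB u u'
  rw [mem_span_range_iff_apply_eq_mul hve hdiag] at hA hB
  simp only [stdQ_apply, hA u, hA u', hB u, hB u']
  exact Finset.sum_congr rfl fun α _ => by ring

theorem mem_span_range_of_isAbelianSubspace_insert (hve : ∀ α, v α e = Pi.single α 1)
    (hdiag : ∀ α β u, β ≠ α → v α u β = 0) {w : P →ₗ[ℂ] Fin h → ℂ}
    (hw : IsAbelianSubspace (stdQ h)
      (Submodule.span ℂ (insert w (Submodule.span ℂ (Set.range v) : Set _)))) :
    w ∈ Submodule.span ℂ (Set.range v) := by
  rw [mem_span_range_iff_apply_eq_mul hve hdiag]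
  intro u α
  have hpair := hw w (Submodule.subset_span (Set.mem_insert _ _)) (v α)
    (Submodule.subset_span (Set.mem_insert_of_mem _
      (Submodule.subset_span (Set.mem_range_self α)))) u e
  rwa [stdQ_apply, stdQ_apply, hve,
    Finset.sum_eq_single α (fun β _ hne => by simp [hne]) (by simp),
    Finset.sum_eq_single α (fun β _ hne => by simp [hdiag α β u hne]) (by simp),
    Pi.single_eq_same, mul_one, mul_comm] at hpair

end AbelianSpan

theorem span_v_is_maximal_abelian_general (h : ℕ) (lam mu : Fin h → ℂ)
    (v : Fin h → ((Fin 3 → ℂ) →ₗ[ℂ] (Fin h → ℂ)))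
    (hv1 : ∀ α, v α (Pi.single 0 1) = (Pi.single α 1 : Fin h → ℂ))
    (hv2 : ∀ α, v α (Pi.single 1 1) = lam α • (Pi.single α 1 : Fin h → ℂ))
    (hv3 : ∀ α, v α (Pi.single 2 1) = mu α • (Pi.single α 1 : Fin h → ℂ))
    (E : Submodule ℂ ((Fin 3 → ℂ) →ₗ[ℂ] (Fin h → ℂ)))
    (hEdef : E = Submodule.span ℂ (Set.range v)) :
    finrank ℂ ↥E = h ∧ IsAbelianSubspace (stdQ h) E ∧
      ∀ w : (Fin 3 → ℂ) →ₗ[ℂ] (Fin h → ℂ),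
        IsAbelianSubspace (stdQ h) (Submodule.span ℂ (insert w (E : Set _))) → w ∈ E := by
  subst hEdef
  have hdiag : ∀ α β u, β ≠ α → v α u β = 0 := by
    intro α β u hne
    have hcoord : LinearMap.proj β ∘ₗ v α = 0 :=
      (Pi.basisFun ℂ (Fin 3)).ext fun i => by fin_cases i <;> simp [hv1, hv2, hv3, hne]
    exact LinearMap.congr_fun hcoord u
  refine ⟨?_, isAbelianSubspace_span_range hv1 hdiag,
    fun w hw => mem_span_range_of_isAbelianSubspace_insert hv1 hdiag hw⟩
  simpa using finrank_span_eq_card (linearIndependent_of_apply_eq_single hv1)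

/-- with `P = ℂ³`, `R = ℂ^h`, the standard form `Q`, nonzero pairwise-distinct
`λ₁, …, λ_h` and arbitrary `μ₁, …, μ_h`, the maps `v_α` with `v_α(e₁) = f_α`,
`v_α(e₂) = λ_α f_α`, `v_α(e₃) = μ_α f_α` span an `h`-dimensional abelian subspace of
`Hom(P,R)` which is maximal abelian. -/
theorem span_v_is_maximal_abelian (h : ℕ) (lam mu : Fin h → ℂ)
    (hlam0 : ∀ α, lam α ≠ 0) (hlam : Function.Injective lam)
    (v : Fin h → ((Fin 3 → ℂ) →ₗ[ℂ] (Fin h → ℂ)))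
    (hv1 : ∀ α, v α (Pi.single 0 1) = (Pi.single α 1 : Fin h → ℂ))
    (hv2 : ∀ α, v α (Pi.single 1 1) = lam α • (Pi.single α 1 : Fin h → ℂ))
    (hv3 : ∀ α, v α (Pi.single 2 1) = mu α • (Pi.single α 1 : Fin h → ℂ))
    (E : Submodule ℂ ((Fin 3 → ℂ) →ₗ[ℂ] (Fin h → ℂ)))
    (hEdef : E = Submodule.span ℂ (Set.range v)) :
    finrank ℂ ↥E = h ∧ IsAbelianSubspace (stdQ h) E ∧
      ∀ w : (Fin 3 → ℂ) →ₗ[ℂ] (Fin h → ℂ),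
        IsAbelianSubspace (stdQ h) (Submodule.span ℂ (insert w (E : Set _))) → w ∈ E :=
  span_v_is_maximal_abelian_general h lam mu v hv1 hv2 hv3 E hEdef
end

section
/- Let U be a connected open subset of ℂ^m, and let A : U → M_{h×h}(ℂ) and B : U → M_{k×h}(ℂ) be differentiable maps satisfying the infinitesimal period relation dA = Bᵀ dB, i.e. for every x ∈ U and every tangent vector v the directional derivatives satisfy D_v A(x) = B(x)ᵀ · D_v B(x). If the first bilinear relation A(x₀) + A(x₀)ᵀ = B(x₀)ᵀ B(x₀) holds at one point x₀ ∈ U, then A(x) + A(x)ᵀ = B(x)ᵀ B(x) holds at every point x ∈ U. -/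
/-!
Differentiating and using the period relation, `d(A + Aᵀ) = Bᵀ dB + (Bᵀ dB)ᵀ = Bᵀ dB + dBᵀ B`,
which is `d(Bᵀ B)`. So `A + Aᵀ` and `Bᵀ B` have the same derivative on the connected open set `U`,
hence differ by a constant there, and that constant vanishes at `x₀`.
-/

attribute [local instance] Matrix.normedAddCommGroup Matrix.normedSpace

open Matrix

namespace Matrix

section transpose

variable (m n R α : Type*) [Semiring R] [AddCommMonoid α] [Module R α] [TopologicalSpace α]

def transposeCLM : Matrix m n α →L[R] Matrix n m α :=
  { transposeLinearEquiv m n R α with cont := continuous_id.matrix_transpose }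

end transpose

section mul

variable (l m n 𝕜 : Type*) [Fintype l] [Fintype m] [Fintype n]
  [NontriviallyNormedField 𝕜] [CompleteSpace 𝕜]

noncomputable def mulCLM : Matrix l m 𝕜 →L[𝕜] Matrix m n 𝕜 →L[𝕜] Matrix l n 𝕜 :=
  (mulLinearMap 𝕜).toContinuousBilinearMap

end mul

end Matrix

section fderiv

variable {l m n 𝕜 E : Type*} [Fintype l] [Fintype m] [Fintype n]
  [NontriviallyNormedField 𝕜] [NormedAddCommGroup E] [NormedSpace 𝕜 E] {x : E}

theorem HasFDerivAt.matrix_transpose {A : E → Matrix m n 𝕜} {A' : E →L[𝕜] Matrix m n 𝕜}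
    (hA : HasFDerivAt A A' x) :
    HasFDerivAt (fun y ↦ (A y)ᵀ) ((transposeCLM m n 𝕜 𝕜).comp A') x :=
  (transposeCLM m n 𝕜 𝕜).hasFDerivAt.comp x hA

theorem DifferentiableAt.matrix_transpose {A : E → Matrix m n 𝕜} (hA : DifferentiableAt 𝕜 A x) :
    DifferentiableAt 𝕜 (fun y ↦ (A y)ᵀ) x :=
  (HasFDerivAt.matrix_transpose hA.hasFDerivAt).differentiableAt

theorem fderiv_add_transpose_apply {A : E → Matrix n n 𝕜} (hA : DifferentiableAt 𝕜 A x)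
    (v : E) : fderiv 𝕜 (fun y ↦ A y + (A y)ᵀ) x v = fderiv 𝕜 A x v + (fderiv 𝕜 A x v)ᵀ :=
  congrArg (· v) (hA.hasFDerivAt.add (HasFDerivAt.matrix_transpose hA.hasFDerivAt)).fderiv

variable [CompleteSpace 𝕜]

theorem HasFDerivAt.matrix_mul {A : E → Matrix l m 𝕜} {B : E → Matrix m n 𝕜}
    {A' : E →L[𝕜] Matrix l m 𝕜} {B' : E →L[𝕜] Matrix m n 𝕜}
    (hA : HasFDerivAt A A' x) (hB : HasFDerivAt B B' x) :
    HasFDerivAt (fun y ↦ A y * B y)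
      ((mulCLM l m n 𝕜).precompR E (A x) B' + (mulCLM l m n 𝕜).precompL E A' (B x)) x :=
  (mulCLM l m n 𝕜).hasFDerivAt_of_bilinear hA hB

theorem DifferentiableAt.matrix_mul {A : E → Matrix l m 𝕜} {B : E → Matrix m n 𝕜}
    (hA : DifferentiableAt 𝕜 A x) (hB : DifferentiableAt 𝕜 B x) :
    DifferentiableAt 𝕜 (fun y ↦ A y * B y) x :=
  (HasFDerivAt.matrix_mul hA.hasFDerivAt hB.hasFDerivAt).differentiableAt

theorem fderiv_transpose_mul_self_apply {B : E → Matrix m n 𝕜} (hB : DifferentiableAt 𝕜 B x)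
    (v : E) :
    fderiv 𝕜 (fun y ↦ (B y)ᵀ * B y) x v
      = (B x)ᵀ * fderiv 𝕜 B x v + (fderiv 𝕜 B x v)ᵀ * B x :=
  congrArg (· v)
    (HasFDerivAt.matrix_mul (HasFDerivAt.matrix_transpose hB.hasFDerivAt) hB.hasFDerivAt).fderiv

end fderiv

/-- if `A : U → M_{h×h}(ℂ)` and `B : U → M_{k×h}(ℂ)` are differentiable on a
connected open set `U ⊆ ℂ^m` and satisfy the infinitesimal period relation
`D_v A(x) = B(x)ᵀ * D_v B(x)`, and if the first bilinear relation
`A + Aᵀ = Bᵀ B` holds at one point of `U`, then it holds at every point of `U`. -/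
theorem first_bilinear_relation_propagates
    (m h k : ℕ) (U : Set (Fin m → ℂ)) (hUopen : IsOpen U) (hUconn : IsConnected U)
    (A : (Fin m → ℂ) → Matrix (Fin h) (Fin h) ℂ)
    (B : (Fin m → ℂ) → Matrix (Fin k) (Fin h) ℂ)
    (hA : ∀ x ∈ U, DifferentiableAt ℂ A x)
    (hB : ∀ x ∈ U, DifferentiableAt ℂ B x)
    (hrel : ∀ x ∈ U, ∀ v : Fin m → ℂ,
      fderiv ℂ A x v = (B x)ᵀ * fderiv ℂ B x v)
    (x₀ : Fin m → ℂ) (hx₀ : x₀ ∈ U)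
    (hinit : A x₀ + (A x₀)ᵀ = (B x₀)ᵀ * B x₀) :
    ∀ x ∈ U, A x + (A x)ᵀ = (B x)ᵀ * B x := by
  have hsym_diff : DifferentiableOn ℂ (fun y ↦ A y + (A y)ᵀ) U := fun x hx ↦
    ((hA x hx).add (hA x hx).matrix_transpose).differentiableWithinAt
  have hgram_diff : DifferentiableOn ℂ (fun y ↦ (B y)ᵀ * B y) U := fun x hx ↦
    ((hB x hx).matrix_transpose.matrix_mul (hB x hx)).differentiableWithinAt
  have hfderiv : ∀ x ∈ U,
      fderiv ℂ (fun y ↦ A y + (A y)ᵀ) x = fderiv ℂ (fun y ↦ (B y)ᵀ * B y) x := by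
    intro x hx
    ext1 v
    rw [fderiv_add_transpose_apply (hA x hx), fderiv_transpose_mul_self_apply (hB x hx),
      hrel x hx, transpose_mul, transpose_transpose]
  exact hUopen.eqOn_of_fderiv_eq hUconn.isPreconnected hsym_diff hgram_diff hfderiv hx₀ hinit
end

section
/- Let E be a finite-dimensional vector space of pairwise commuting infinitesimal variations of a weight-4 polarized structure, let ζ ∈ H₂, and set E_ζ = { φ ∈ E : φ₂(ζ) = 0 } and σ_ζ = dim span{ φ₀(ω) : φ ∈ E_ζ, ω ∈ H₀ } ⊆ H₁. Then dim E − dim E_ζ ≤ dim H₃ − σ_ζ. -/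
/-!
The map `φ ↦ φ₂ ζ` sends `E` onto a subspace `W ⊆ H₃` with kernel `E_ζ`, so
`dim E − dim E_ζ ≤ dim W`. For `φ ∈ E` and `ψ ∈ E_ζ`, the two infinitesimal period relations and
`φ₁ψ₀ = ψ₁φ₀` give `Q₁(ψ₀ω, φ₂ζ) = −Q₂(φ₁ψ₀ω, ζ) = −Q₂(ψ₁φ₀ω, ζ) = Q₁(φ₀ω, ψ₂ζ) = 0`, so the
span of the `ψ₀ω` is `Q₁`-orthogonal to `W`. Nondegeneracy of `Q₁` bounds its dimension by
`dim H₁ − dim W = dim H₃ − dim W`.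
-/

open Module

theorem Submodule.finrank_le_finrank_map_add_finrank_inf_ker {K M V : Type*} [DivisionRing K]
    [AddCommGroup M] [Module K M] [AddCommGroup V] [Module K V]
    (f : M →ₗ[K] V) (p : Submodule K M) :
    finrank K p ≤ finrank K (p.map f) + finrank K ↥(p ⊓ LinearMap.ker f) := by
  by_cases hp : FiniteDimensional K p
  · rw [← LinearMap.range_domRestrict, ← Submodule.map_comap_subtype, ← LinearMap.ker_domRestrict,
      Submodule.finrank_map_subtype_eq, LinearMap.finrank_range_add_finrank_ker]
  · rw [finrank_of_not_finite hp]
    exact Nat.zero_le _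

section Pairing

variable {K M N : Type*} [Field K] [AddCommGroup M] [Module K M] [AddCommGroup N] [Module K N]
  {B : M →ₗ[K] N →ₗ[K] K}

theorem LinearMap.SeparatingLeft.finrank_le [FiniteDimensional K N] (hB : B.SeparatingLeft) :
    finrank K M ≤ finrank K N := by
  have hinj : Function.Injective B :=
    LinearMap.ker_eq_bot.mp (LinearMap.separatingLeft_iff_ker_eq_bot.mp hB)
  simpa only [Subspace.dual_finrank_eq] using LinearMap.finrank_le_finrank_of_injective hinj

theorem LinearMap.SeparatingRight.finrank_span_add_finrank_le [FiniteDimensional K M]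
    (hB : B.SeparatingRight) {s : Set M} {W : Submodule K N}
    (hsW : ∀ x ∈ s, ∀ y ∈ W, B x y = 0) :
    finrank K (Submodule.span K s) + finrank K W ≤ finrank K M := by
  set Φ := LinearMap.range (B.flip ∘ₗ W.subtype)
  have hΦ : finrank K Φ = finrank K W := by
    refine LinearMap.finrank_range_of_inj ((injective_iff_map_eq_zero _).mpr ?_)
    intro y hy
    exact Subtype.ext (hB y fun x => LinearMap.congr_fun hy x)
  have hsΦ : Submodule.span K s ≤ Φ.dualCoannihilator := by
    rw [Submodule.span_le]
    intro x hx
    rw [SetLike.mem_coe, Submodule.mem_dualCoannihilator]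
    rintro _ ⟨y, rfl⟩
    exact hsW x hx y y.2
  calc finrank K (Submodule.span K s) + finrank K W
      ≤ finrank K Φ.dualCoannihilator + finrank K Φ := by
        rw [hΦ]; exact Nat.add_le_add_right (Submodule.finrank_mono hsΦ) _
    _ = finrank K M := by rw [add_comm, Subspace.finrank_add_finrank_dualCoannihilator_eq]

end Pairing

theorem pairing_swap_of_commute {R H0 H1 H2 H3 : Type*} [CommRing R]
    [AddCommGroup H0] [Module R H0] [AddCommGroup H1] [Module R H1]
    [AddCommGroup H2] [Module R H2] [AddCommGroup H3] [Module R H3]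
    (Q1 : H1 →ₗ[R] H3 →ₗ[R] R) (Q2 : H2 →ₗ[R] H2 →ₗ[R] R)
    {φ₀ ψ₀ : H0 →ₗ[R] H1} {φ₁ ψ₁ : H1 →ₗ[R] H2} {φ₂ ψ₂ : H2 →ₗ[R] H3}
    (hφ : ∀ u v, Q2 (φ₁ u) v + Q1 u (φ₂ v) = 0) (hψ : ∀ u v, Q2 (ψ₁ u) v + Q1 u (ψ₂ v) = 0)
    (hcomm : ∀ u, φ₁ (ψ₀ u) = ψ₁ (φ₀ u)) (ω : H0) (ζ : H2) :
    Q1 (ψ₀ ω) (φ₂ ζ) = Q1 (φ₀ ω) (ψ₂ ζ) := by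
  calc Q1 (ψ₀ ω) (φ₂ ζ) = -Q2 (φ₁ (ψ₀ ω)) ζ := eq_neg_of_add_eq_zero_right (hφ _ _)
    _ = -Q2 (ψ₁ (φ₀ ω)) ζ := by rw [hcomm]
    _ = Q1 (φ₀ ω) (ψ₂ ζ) := neg_eq_of_add_eq_zero_right (hψ _ _)

theorem noether_lefschetz_codim_bound_weight4_general
    (H0 H1 H2 H3 H4 : Type*)
    [AddCommGroup H0] [Module ℂ H0]
    [AddCommGroup H1] [Module ℂ H1] [FiniteDimensional ℂ H1]
    [AddCommGroup H2] [Module ℂ H2]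
    [AddCommGroup H3] [Module ℂ H3] [FiniteDimensional ℂ H3]
    [AddCommGroup H4] [Module ℂ H4]
    (Q0 : H0 →ₗ[ℂ] H4 →ₗ[ℂ] ℂ) (Q1 : H1 →ₗ[ℂ] H3 →ₗ[ℂ] ℂ)
    (Q2 : H2 →ₗ[ℂ] H2 →ₗ[ℂ] ℂ)
    (hQ1l : ∀ u, (∀ v, Q1 u v = 0) → u = 0)
    (hQ1r : ∀ v, (∀ u, Q1 u v = 0) → v = 0)
    -- `E` is a space of infinitesimal variations, each `φ = (φ₀, φ₁, φ₂, φ₃)`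
    (E : Submodule ℂ ((H0 →ₗ[ℂ] H1) × (H1 →ₗ[ℂ] H2) × (H2 →ₗ[ℂ] H3) × (H3 →ₗ[ℂ] H4)))
    (hvar : ∀ φ ∈ E,
      (∀ u v, Q1 (φ.1 u) v + Q0 u (φ.2.2.2 v) = 0) ∧
      (∀ u v, Q2 (φ.2.1 u) v + Q1 u (φ.2.2.1 v) = 0))
    -- the elements of `E` pairwise commute
    (hcomm : ∀ φ ∈ E, ∀ ψ ∈ E,
      (∀ u, φ.2.1 (ψ.1 u) = ψ.2.1 (φ.1 u)) ∧
      (∀ u, φ.2.2.1 (ψ.2.1 u) = ψ.2.2.1 (φ.2.1 u)) ∧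
      (∀ u, φ.2.2.2 (ψ.2.2.1 u) = ψ.2.2.2 (φ.2.2.1 u)))
    (ζ : H2)
    -- `E_ζ = { φ ∈ E : φ₂ ζ = 0 }`
    (Eζ : Submodule ℂ ((H0 →ₗ[ℂ] H1) × (H1 →ₗ[ℂ] H2) × (H2 →ₗ[ℂ] H3) × (H3 →ₗ[ℂ] H4)))
    (hEζ : ∀ φ, φ ∈ Eζ ↔ φ ∈ E ∧ φ.2.2.1 ζ = 0) :
    (finrank ℂ ↥E : ℤ) - (finrank ℂ ↥Eζ : ℤ) ≤
      (finrank ℂ H3 : ℤ) -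
        (finrank ℂ ↥(Submodule.span ℂ
          {x : H1 | ∃ φ ∈ Eζ, ∃ ω : H0, x = φ.1 ω}) : ℤ) := by
  let ev : ((H0 →ₗ[ℂ] H1) × (H1 →ₗ[ℂ] H2) × (H2 →ₗ[ℂ] H3) × (H3 →ₗ[ℂ] H4)) →ₗ[ℂ] H3 :=
    LinearMap.applyₗ ζ ∘ₗ LinearMap.fst _ _ _ ∘ₗ LinearMap.snd _ _ _ ∘ₗ LinearMap.snd _ _ _
  have hEζ_eq : Eζ = E ⊓ LinearMap.ker ev := by
    ext φ
    exact hEζ φ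
  have horth : ∀ x ∈ {x : H1 | ∃ φ ∈ Eζ, ∃ ω : H0, x = φ.1 ω}, ∀ y ∈ E.map ev, Q1 x y = 0 := by
    rintro _ ⟨ψ, hψ, ω, rfl⟩ _ ⟨φ, hφ, rfl⟩
    obtain ⟨hψE, hψζ⟩ := (hEζ ψ).mp hψ
    have hswap := pairing_swap_of_commute Q1 Q2 (hvar φ hφ).2 (hvar ψ hψE).2
      (hcomm φ hφ ψ hψE).1 ω ζ
    simpa [ev, hψζ] using hswap
  have hrank := Submodule.finrank_le_finrank_map_add_finrank_inf_ker ev E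
  have horth_rank := LinearMap.SeparatingRight.finrank_span_add_finrank_le hQ1r horth
  have hdim := LinearMap.SeparatingLeft.finrank_le hQ1l
  rw [← hEζ_eq] at hrank
  omega

/-- Proposition 5.6: for a vector space `E` of pairwise commuting
infinitesimal variations of a weight-4 polarized structure and `ζ ∈ H₂`, with
`E_ζ = {φ ∈ E : φ₂ ζ = 0}` and `σ_ζ = dim span{φ₀ ω : φ ∈ E_ζ, ω ∈ H₀}`, one has
`dim E − dim E_ζ ≤ dim H₃ − σ_ζ`. -/
theorem noether_lefschetz_codim_bound_weight4
    (H0 H1 H2 H3 H4 : Type*)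
    [AddCommGroup H0] [Module ℂ H0] [FiniteDimensional ℂ H0]
    [AddCommGroup H1] [Module ℂ H1] [FiniteDimensional ℂ H1]
    [AddCommGroup H2] [Module ℂ H2] [FiniteDimensional ℂ H2]
    [AddCommGroup H3] [Module ℂ H3] [FiniteDimensional ℂ H3]
    [AddCommGroup H4] [Module ℂ H4] [FiniteDimensional ℂ H4]
    (Q0 : H0 →ₗ[ℂ] H4 →ₗ[ℂ] ℂ) (Q1 : H1 →ₗ[ℂ] H3 →ₗ[ℂ] ℂ)
    (Q2 : H2 →ₗ[ℂ] H2 →ₗ[ℂ] ℂ)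
    (hQ0l : ∀ u, (∀ v, Q0 u v = 0) → u = 0)
    (hQ0r : ∀ v, (∀ u, Q0 u v = 0) → v = 0)
    (hQ1l : ∀ u, (∀ v, Q1 u v = 0) → u = 0)
    (hQ1r : ∀ v, (∀ u, Q1 u v = 0) → v = 0)
    (hQ2l : ∀ u, (∀ v, Q2 u v = 0) → u = 0)
    (hQ2sym : ∀ u v, Q2 u v = Q2 v u)
    -- `E` is a space of infinitesimal variations, each `φ = (φ₀, φ₁, φ₂, φ₃)`
    (E : Submodule ℂ ((H0 →ₗ[ℂ] H1) × (H1 →ₗ[ℂ] H2) × (H2 →ₗ[ℂ] H3) × (H3 →ₗ[ℂ] H4)))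
    (hvar : ∀ φ ∈ E,
      (∀ u v, Q1 (φ.1 u) v + Q0 u (φ.2.2.2 v) = 0) ∧
      (∀ u v, Q2 (φ.2.1 u) v + Q1 u (φ.2.2.1 v) = 0))
    -- the elements of `E` pairwise commute
    (hcomm : ∀ φ ∈ E, ∀ ψ ∈ E,
      (∀ u, φ.2.1 (ψ.1 u) = ψ.2.1 (φ.1 u)) ∧
      (∀ u, φ.2.2.1 (ψ.2.1 u) = ψ.2.2.1 (φ.2.1 u)) ∧
      (∀ u, φ.2.2.2 (ψ.2.2.1 u) = ψ.2.2.2 (φ.2.2.1 u)))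
    (ζ : H2)
    -- `E_ζ = { φ ∈ E : φ₂ ζ = 0 }`
    (Eζ : Submodule ℂ ((H0 →ₗ[ℂ] H1) × (H1 →ₗ[ℂ] H2) × (H2 →ₗ[ℂ] H3) × (H3 →ₗ[ℂ] H4)))
    (hEζ : ∀ φ, φ ∈ Eζ ↔ φ ∈ E ∧ φ.2.2.1 ζ = 0) :
    (finrank ℂ ↥E : ℤ) - (finrank ℂ ↥Eζ : ℤ) ≤
      (finrank ℂ H3 : ℤ) -
        (finrank ℂ ↥(Submodule.span ℂ
          {x : H1 | ∃ φ ∈ Eζ, ∃ ω : H0, x = φ.1 ω}) : ℤ) :=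
  noether_lefschetz_codim_bound_weight4_general H0 H1 H2 H3 H4 Q0 Q1 Q2 hQ1l hQ1r E hvar hcomm ζ Eζ
    hEζ
end

section
/- Let m ≥ 2, let E be a finite-dimensional vector space of pairwise commuting infinitesimal variations of a weight-2m polarized structure, let ζ ∈ H_m, and set E_ζ = { φ ∈ E : φ_m(ζ) = 0 }. Let σ_ζ be the dimension of the span in H_{m−1} of all vectors of the form ψ^{(m−1−p)}_{m−2} ∘ ⋯ ∘ ψ^{(2)}_{p+1} ∘ ψ^{(1)}_p (u), where 0 ≤ p ≤ m−2, u ∈ H_p, each ψ^{(i)} ∈ E, and at least one ψ^{(i)} ∈ E_ζ. Then dim E − dim E_ζ ≤ dim H_{m+1} − σ_ζ. -/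
/-!
Evaluation at `ζ` identifies `E / E_ζ` with the subspace `W = {φ_m ζ : φ ∈ E}` of `H_{m+1}`.
Every chain vector containing a factor `χ ∈ E_ζ` can, by commutativity, be rewritten with `χ`
applied last, so it lies in `N = ∑_{χ ∈ E_ζ} im χ_{m-2} ⊆ H_{m-1}`. The infinitesimal-variation
identity gives `Q_{m-1}(χ_{m-2} u, φ_m ζ) = -Q_{m-2}(u, χ_{m+1} φ_m ζ)
= -Q_{m-2}(u, φ_{m+1} χ_m ζ) = 0`, so `N ⊥ W`, and nondegeneracy of `Q_{m-1}` gives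
`σ_ζ + dim W ≤ dim N + dim W ≤ dim H_{m+1}`.
-/

open Module

theorem cast_congrArg_zero {ι : Type*} {M : ι → Type*} [∀ i, Zero (M i)] {a b : ι} (h : a = b) :
    cast (congrArg M h) (0 : M a) = 0 := by
  subst h; rfl

theorem Submodule.finrank_map_add_finrank_inf_ker_s11 {K V V₂ : Type*} [Field K]
    [AddCommGroup V] [Module K V] [AddCommGroup V₂] [Module K V₂]
    (f : V →ₗ[K] V₂) (E : Submodule K V) [FiniteDimensional K E] :
    finrank K (E.map f) + finrank K ↥(E ⊓ LinearMap.ker f) = finrank K E := by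
  rw [← LinearMap.range_domRestrict, ← Submodule.map_comap_subtype, ← LinearMap.ker_domRestrict,
    Submodule.finrank_map_subtype_eq]
  exact LinearMap.finrank_range_add_finrank_ker _

theorem LinearMap.SeparatingLeft.finrank_add_finrank_le {K V W : Type*} [Field K]
    [AddCommGroup V] [Module K V] [AddCommGroup W] [Module K W] [FiniteDimensional K W]
    {B : V →ₗ[K] W →ₗ[K] K} (hB : B.SeparatingLeft) {S : Submodule K V} {T : Submodule K W}
    (hST : ∀ s ∈ S, ∀ t ∈ T, B s t = 0) :
    finrank K S + finrank K T ≤ finrank K W := by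
  have hinj : Function.Injective B := LinearMap.ker_eq_bot.1 (separatingLeft_iff_ker_eq_bot.1 hB)
  have hSle : S.map B ≤ T.dualAnnihilator := by
    rintro _ ⟨s, hs, rfl⟩
    exact (Submodule.mem_dualAnnihilator _).2 fun t ht => hST s hs t ht
  calc finrank K S + finrank K T
      = finrank K (S.map B) + finrank K T := by
        rw [LinearEquiv.finrank_eq (Submodule.equivMapOfInjective B hinj S)]
    _ ≤ finrank K T.dualAnnihilator + finrank K T := by
        gcongr; exact Submodule.finrank_mono hSle
    _ = finrank K W := by rw [add_comm, Subspace.finrank_add_finrank_dualAnnihilator_eq]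

namespace InfinitesimalVariation

variable {K : Type*} [CommRing K] {H : ℕ → Type*} [∀ p, AddCommGroup (H p)]
  [∀ p, Module K (H p)] {n : ℕ}

def rangeSpan (F : Set (∀ p : Fin n, H p.1 →ₗ[K] H (p.1 + 1))) (j : ℕ) :
    Submodule K (H (j + 1)) :=
  Submodule.span K {y | ∃ χ ∈ F, ∃ (h : j < n) (u : H j), χ ⟨j, h⟩ u = y}

theorem apply_mem_rangeSpan {F : Set (∀ p : Fin n, H p.1 →ₗ[K] H (p.1 + 1))}
    {ψ : ∀ p : Fin n, H p.1 →ₗ[K] H (p.1 + 1)} {j : ℕ} (h : j + 1 < n)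
    (hψ : ∀ χ ∈ F, ∀ u : H j, ψ ⟨j + 1, h⟩ (χ ⟨j, by omega⟩ u) = χ ⟨j + 1, h⟩ (ψ ⟨j, by omega⟩ u))
    {y : H (j + 1)} (hy : y ∈ rangeSpan F j) :
    ψ ⟨j + 1, h⟩ y ∈ rangeSpan F (j + 1) := by
  suffices rangeSpan F j ≤ (rangeSpan F (j + 1)).comap (ψ ⟨j + 1, h⟩) from this hy
  refine Submodule.span_le.2 ?_
  rintro _ ⟨χ, hχ, -, u, rfl⟩
  rw [SetLike.mem_coe, Submodule.mem_comap, hψ χ hχ u]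
  exact Submodule.subset_span ⟨χ, hχ, h, _, rfl⟩

theorem chain_mem_rangeSpan {E F : Set (∀ p : Fin n, H p.1 →ₗ[K] H (p.1 + 1))}
    (hcomm : ∀ φ ∈ E, ∀ χ ∈ F, ∀ j : ℕ, (h : j + 1 < n) → ∀ u : H j,
      φ ⟨j + 1, h⟩ (χ ⟨j, by omega⟩ u) = χ ⟨j + 1, h⟩ (φ ⟨j, by omega⟩ u))
    {p r : ℕ} (hr : r < n) {w : ∀ i, H i} {ψ : ℕ → ∀ q : Fin n, H q.1 →ₗ[K] H (q.1 + 1)}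
    (hψE : ∀ i, p ≤ i → i ≤ r → ψ i ∈ E) {i₀ : ℕ} (hpi₀ : p ≤ i₀) (hi₀r : i₀ ≤ r)
    (hψF : ψ i₀ ∈ F) (hw : ∀ i, p ≤ i → (hi : i ≤ r) → w (i + 1) = ψ i ⟨i, by omega⟩ (w i)) :
    w (r + 1) ∈ rangeSpan F r := by
  induction r, hi₀r using Nat.le_induction with
  | base => exact hw i₀ hpi₀ le_rfl ▸ Submodule.subset_span ⟨_, hψF, hr, _, rfl⟩
  | succ r hi₀r ih =>
    rw [hw (r + 1) (by omega) le_rfl]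
    exact apply_mem_rangeSpan hr (hcomm _ (hψE _ (by omega) le_rfl) · · r hr)
      (ih (by omega) (fun i h₁ h₂ => hψE i h₁ (by omega)) (fun i h₁ h₂ => hw i h₁ (by omega)))

theorem apply_cast_eq_zero (χ : ∀ p : Fin n, H p.1 →ₗ[K] H (p.1 + 1)) {a b : ℕ} (hab : a = b)
    (ha : a < n) (hb : b < n) {x : H a} (hx : χ ⟨a, ha⟩ x = 0) :
    χ ⟨b, hb⟩ (cast (congrArg H hab) x) = 0 := by
  subst hab; exact hx

theorem pairing_eq_zero_of_mem_rangeSpan {m j : ℕ} (hj : j < 2 * m)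
    (Q : ∀ p, H p →ₗ[K] H (2 * m - p) →ₗ[K] K)
    {F : Set (∀ p : Fin (2 * m), H p.1 →ₗ[K] H (p.1 + 1))}
    (hvar : ∀ χ ∈ F, ∀ (u : H j) (v : H (2 * m - (j + 1))),
      Q (j + 1) (χ ⟨j, hj⟩ u) v +
        Q j u (cast (congrArg H (by omega : (2 * m - (j + 1)) + 1 = 2 * m - j))
          (χ ⟨2 * m - (j + 1), by omega⟩ v)) = 0)
    {v : H (2 * m - (j + 1))} (hv : ∀ χ ∈ F, χ ⟨2 * m - (j + 1), by omega⟩ v = 0)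
    {x : H (j + 1)} (hx : x ∈ rangeSpan F j) :
    Q (j + 1) x v = 0 := by
  suffices rangeSpan F j ≤ LinearMap.ker ((Q (j + 1)).flip v) from this hx
  refine Submodule.span_le.2 ?_
  rintro _ ⟨χ, hχ, -, u, rfl⟩
  have h := hvar χ hχ u v
  rwa [hv χ hχ, cast_congrArg_zero (M := H) (by omega : 2 * m - (j + 1) + 1 = 2 * m - j), map_zero,
    add_zero] at h

end InfinitesimalVariation

open InfinitesimalVariation in
/-- Proposition 5.9: for `m ≥ 2`, a vector space `E` of pairwise commuting
infinitesimal variations of a weight-`2m` polarized structure and `ζ ∈ H_m`, with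
`E_ζ = {φ ∈ E : φ_m ζ = 0}` and `σ_ζ` the dimension of the span in `H_{m-1}` of all
vectors obtained by applying chains `ψ^{(m-1-p)}_{m-2} ∘ ⋯ ∘ ψ^{(1)}_p` (each `ψ^{(i)} ∈ E`,
at least one in `E_ζ`) to elements of `H_p`, `0 ≤ p ≤ m-2`, one has
`dim E − dim E_ζ ≤ dim H_{m+1} − σ_ζ`. -/
theorem noether_lefschetz_codim_bound
    (m : ℕ) (hm : 2 ≤ m)
    (H : ℕ → Type*)
    [∀ p, AddCommGroup (H p)] [∀ p, Module ℂ (H p)] [∀ p, FiniteDimensional ℂ (H p)]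
    (Q : ∀ p, H p →ₗ[ℂ] H (2 * m - p) →ₗ[ℂ] ℂ)
    -- the pairings are nondegenerate
    (hQl : ∀ p, p ≤ 2 * m → ∀ u : H p, (∀ v, Q p u v = 0) → u = 0)
    -- `E` is a space of infinitesimal variations `φ = (φ₀, …, φ_{2m-1})`
    (E : Submodule ℂ (∀ p : Fin (2 * m), H p.1 →ₗ[ℂ] H (p.1 + 1)))
    (hvar : ∀ φ ∈ E, ∀ p : ℕ, (hp : p + 1 ≤ 2 * m) → ∀ (u : H p) (v : H (2 * m - (p + 1))),
      Q (p + 1) (φ ⟨p, by omega⟩ u) v +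
        Q p u (cast (congrArg H (by omega : (2 * m - (p + 1)) + 1 = 2 * m - p))
          (φ ⟨2 * m - (p + 1), by omega⟩ v)) = 0)
    -- the elements of `E` pairwise commute
    (hcomm : ∀ φ ∈ E, ∀ ψ ∈ E, ∀ p : ℕ, (hp : p + 1 < 2 * m) → ∀ u : H p,
      φ ⟨p + 1, hp⟩ (ψ ⟨p, by omega⟩ u) = ψ ⟨p + 1, hp⟩ (φ ⟨p, by omega⟩ u))
    (ζ : H m)
    -- `E_ζ = { φ ∈ E : φ_m ζ = 0 }`
    (Eζ : Submodule ℂ (∀ p : Fin (2 * m), H p.1 →ₗ[ℂ] H (p.1 + 1)))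
    (hEζ : ∀ φ, φ ∈ Eζ ↔ φ ∈ E ∧ φ ⟨m, by omega⟩ ζ = 0)
    -- `σ_ζ` is the dimension of the span of the chain vectors in `H_{m-1}`
    (σζ : ℕ)
    (hσ : σζ = finrank ℂ ↥(Submodule.span ℂ
      { x : H (m - 1) | ∃ (p : ℕ) (_ : p ≤ m - 2)
          (w : ∀ i, H i) (ψ : ℕ → (∀ q : Fin (2 * m), H q.1 →ₗ[ℂ] H (q.1 + 1))),
          (∀ i, p ≤ i → i ≤ m - 2 → ψ i ∈ E) ∧
          (∃ i, p ≤ i ∧ i ≤ m - 2 ∧ ψ i ∈ Eζ) ∧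
          (∀ i, (h1 : p ≤ i) → (h2 : i ≤ m - 2) → w (i + 1) = ψ i ⟨i, by omega⟩ (w i)) ∧
          x = w (m - 1) })) :
    (finrank ℂ ↥E : ℤ) - (finrank ℂ ↥Eζ : ℤ) ≤ (finrank ℂ (H (m + 1)) : ℤ) - (σζ : ℤ) := by
  obtain ⟨k, rfl⟩ : ∃ k, m = k + 2 := ⟨m - 2, by omega⟩
  have hdual : k + 2 + 1 = 2 * (k + 2) - (k + 1) := by omega
  let ev : (∀ p : Fin (2 * (k + 2)), H p.1 →ₗ[ℂ] H (p.1 + 1)) →ₗ[ℂ] H (2 * (k + 2) - (k + 1)) :=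
    (LinearEquiv.cast hdual).toLinearMap ∘ₗ LinearMap.applyₗ ζ ∘ₗ LinearMap.proj (R := ℂ)
      (φ := fun p : Fin (2 * (k + 2)) => H p.1 →ₗ[ℂ] H (p.1 + 1)) ⟨k + 2, by omega⟩
  have hEζ_eq_inf_ker : Eζ = E ⊓ LinearMap.ker ev := by
    ext φ
    simp [hEζ, ev]
  have hrank := Submodule.finrank_map_add_finrank_inf_ker_s11 ev E
  rw [← hEζ_eq_inf_ker] at hrank
  let N : Submodule ℂ (H (k + 1)) := rangeSpan (n := 2 * (k + 2)) Eζ k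
  have hσN : σζ ≤ finrank ℂ N := by
    rw [hσ]
    refine Submodule.finrank_mono (Submodule.span_le.2 ?_)
    rintro _ ⟨p, -, w, ψ, hψE, ⟨i₀, hpi₀, hi₀, hψζ⟩, hw, rfl⟩
    exact chain_mem_rangeSpan (E := E) (fun φ hφ χ hχ => hcomm φ hφ χ ((hEζ χ).1 hχ).1)
      (r := k) (by omega) hψE hpi₀ hi₀ hψζ hw
  have horth : ∀ x ∈ N, ∀ y ∈ E.map ev, Q (k + 1) x y = 0 := by
    rintro x hx _ ⟨φ, hφ, rfl⟩
    refine pairing_eq_zero_of_mem_rangeSpan (by omega) Q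
      (fun χ hχ => hvar χ ((hEζ χ).1 hχ).1 k (by omega)) (fun χ hχ => ?_) hx
    obtain ⟨hχE, hχζ⟩ := (hEζ χ).1 hχ
    refine apply_cast_eq_zero χ hdual (by omega) _ (x := φ ⟨k + 2, by omega⟩ ζ) ?_
    rw [hcomm χ hχE φ hφ (k + 2) (by omega) ζ, hχζ, map_zero]
  have hdim := LinearMap.SeparatingLeft.finrank_add_finrank_le (hQl (k + 1) (by omega)) horth
  have hH : finrank ℂ (H (2 * (k + 2) - (k + 1))) = finrank ℂ (H (k + 2 + 1)) := by
    rw [← hdual]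
  omega
end

section
/- Suppose dim H₀ = 1 with generator ω, let T be a finite-dimensional vector space of pairwise commuting infinitesimal variations of a weight-4 polarized structure such that the linear map T → H₁, θ ↦ θ₀(ω), is an isomorphism, and let ζ ∈ H₂. Define the bilinear form Q_ζ on T by Q_ζ(θ, θ') = Q₂(θ₁(θ'₀(ω)), ζ), and set T_ζ = { θ ∈ T : θ₂(ζ) = 0 }. Then Q_ζ is symmetric, and dim T − dim T_ζ = rank Q_ζ (the rank of the associated linear map T → T*). -/
/-!
Both claims come from the two compatibilities of an infinitesimal variation. Commutativity
`θ₁ ∘ θ'₀ = θ'₁ ∘ θ₀` at `ω` makes `Q_ζ` symmetric. The polarization identity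
`Q₂(θ₁ u, ζ) = -Q₁(u, θ₂ ζ)` rewrites `Q_ζ(θ, θ')` as `-Q₁(θ'₀ ω, θ₂ ζ)`; since `θ' ↦ θ'₀ ω`
is onto `H₁` and `Q₁` is nondegenerate, `θ` lies in the kernel of `Q_ζ` exactly when
`θ₂ ζ = 0`, i.e. the kernel is `T_ζ`, and rank–nullity gives the dimension count.
-/

open Module

theorem LinearMap.mem_ker_iff_of_apply_add_pairing_eq_zero {R T V W : Type*} [CommRing R]
    [AddCommGroup T] [Module R T] [AddCommGroup V] [Module R V] [AddCommGroup W] [Module R W]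
    {B : V →ₗ[R] W →ₗ[R] R} (hB : ∀ w, (∀ v, B v w = 0) → w = 0)
    {f : T → V} (hf : Function.Surjective f) {g : T → W} {L : T →ₗ[R] T →ₗ[R] R}
    (hL : ∀ θ θ', L θ θ' + B (f θ') (g θ) = 0) (θ : T) :
    θ ∈ LinearMap.ker L ↔ g θ = 0 := by
  have hL' : ∀ θ', L θ θ' = -B (f θ') (g θ) := fun θ' => eq_neg_of_add_eq_zero_left (hL θ θ')
  constructor
  · intro hθ
    refine hB _ fun v => ?_
    obtain ⟨θ', rfl⟩ := hf v
    rw [← neg_eq_zero, ← hL', hθ, LinearMap.zero_apply]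
  · intro hg
    ext θ'
    simp [hL', hg]

theorem calabi_yau_fourfold_rank_general
    (H0 H1 H2 H3 H4 : Type*)
    [AddCommGroup H0] [Module ℂ H0]
    [AddCommGroup H1] [Module ℂ H1] [FiniteDimensional ℂ H1]
    [AddCommGroup H2] [Module ℂ H2]
    [AddCommGroup H3] [Module ℂ H3]
    [AddCommGroup H4] [Module ℂ H4]
    (Q0 : H0 →ₗ[ℂ] H4 →ₗ[ℂ] ℂ) (Q1 : H1 →ₗ[ℂ] H3 →ₗ[ℂ] ℂ)
    (Q2 : H2 →ₗ[ℂ] H2 →ₗ[ℂ] ℂ)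
    (hQ1r : ∀ v, (∀ u, Q1 u v = 0) → v = 0)
    (ω : H0)
    -- `T` is a space of infinitesimal variations `θ = (θ₀, θ₁, θ₂, θ₃)`
    (T : Submodule ℂ ((H0 →ₗ[ℂ] H1) × (H1 →ₗ[ℂ] H2) × (H2 →ₗ[ℂ] H3) × (H3 →ₗ[ℂ] H4)))
    (hvar : ∀ θ ∈ T,
      (∀ u v, Q1 (θ.1 u) v + Q0 u (θ.2.2.2 v) = 0) ∧
      (∀ u v, Q2 (θ.2.1 u) v + Q1 u (θ.2.2.1 v) = 0))
    (hcomm : ∀ θ ∈ T, ∀ ψ ∈ T,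
      (∀ u, θ.2.1 (ψ.1 u) = ψ.2.1 (θ.1 u)) ∧
      (∀ u, θ.2.2.1 (ψ.2.1 u) = ψ.2.2.1 (θ.2.1 u)) ∧
      (∀ u, θ.2.2.2 (ψ.2.2.1 u) = ψ.2.2.2 (θ.2.2.1 u)))
    -- the map `θ ↦ θ₀ ω` is an isomorphism `T → H₁`
    (hbij : Function.Bijective (fun θ : ↥T => (θ : (H0 →ₗ[ℂ] H1) × (H1 →ₗ[ℂ] H2) ×
      (H2 →ₗ[ℂ] H3) × (H3 →ₗ[ℂ] H4)).1 ω))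
    (ζ : H2)
    -- `T_ζ = { θ ∈ T : θ₂ ζ = 0 }`
    (Tζ : Submodule ℂ ((H0 →ₗ[ℂ] H1) × (H1 →ₗ[ℂ] H2) × (H2 →ₗ[ℂ] H3) × (H3 →ₗ[ℂ] H4)))
    (hTζ : ∀ θ, θ ∈ Tζ ↔ θ ∈ T ∧ θ.2.2.1 ζ = 0)
    -- `L` is the linear map `T → T*` associated to the bilinear form `Q_ζ`
    (L : ↥T →ₗ[ℂ] (↥T →ₗ[ℂ] ℂ))
    (hL : ∀ θ θ' : ↥T, L θ θ' =
      Q2 ((θ : (H0 →ₗ[ℂ] H1) × (H1 →ₗ[ℂ] H2) × (H2 →ₗ[ℂ] H3) × (H3 →ₗ[ℂ] H4)).2.1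
        (((θ' : (H0 →ₗ[ℂ] H1) × (H1 →ₗ[ℂ] H2) × (H2 →ₗ[ℂ] H3) × (H3 →ₗ[ℂ] H4)).1) ω)) ζ) :
    (∀ θ θ' : ↥T, L θ θ' = L θ' θ) ∧
      finrank ℂ ↥T = finrank ℂ ↥Tζ + finrank ℂ ↥(LinearMap.range L) := by
  refine ⟨fun θ θ' => by rw [hL, hL, (hcomm _ θ.2 _ θ'.2).1 ω], ?_⟩
  have : Module.Finite ℂ T :=
    .of_injective (LinearMap.applyₗ ω ∘ₗ LinearMap.fst ℂ _ _ ∘ₗ T.subtype) hbij.1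
  have hker : ∀ θ : T, θ ∈ LinearMap.ker L ↔ θ.1.2.2.1 ζ = 0 :=
    LinearMap.mem_ker_iff_of_apply_add_pairing_eq_zero hQ1r hbij.2
      fun θ θ' => by rw [hL]; exact (hvar _ θ.2).2 _ ζ
  have hTζ_eq : Tζ = (LinearMap.ker L).map T.subtype := by
    ext θ
    simp only [hTζ, Submodule.mem_map, hker, Submodule.subtype_apply]
    exact ⟨fun ⟨hθ, hζ⟩ => ⟨⟨θ, hθ⟩, hζ, rfl⟩, fun ⟨θ', hζ, hθ'⟩ => hθ' ▸ ⟨θ'.2, hζ⟩⟩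
  rw [hTζ_eq, Submodule.finrank_map_subtype_eq, add_comm]
  exact (LinearMap.finrank_range_add_finrank_ker L).symm

/-- Proposition 5.20, Calabi–Yau fourfold case: if `dim H₀ = 1` with
generator `ω`, `T` is a space of pairwise commuting infinitesimal variations such that
`θ ↦ θ₀ ω` is an isomorphism `T ≅ H₁`, and `ζ ∈ H₂`, then the bilinear form
`Q_ζ(θ, θ') = Q₂(θ₁(θ'₀ ω), ζ)` on `T` is symmetric, and
`dim T − dim T_ζ = rank Q_ζ` where `T_ζ = {θ ∈ T : θ₂ ζ = 0}`. -/
theorem calabi_yau_fourfold_rank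
    (H0 H1 H2 H3 H4 : Type*)
    [AddCommGroup H0] [Module ℂ H0] [FiniteDimensional ℂ H0]
    [AddCommGroup H1] [Module ℂ H1] [FiniteDimensional ℂ H1]
    [AddCommGroup H2] [Module ℂ H2] [FiniteDimensional ℂ H2]
    [AddCommGroup H3] [Module ℂ H3] [FiniteDimensional ℂ H3]
    [AddCommGroup H4] [Module ℂ H4] [FiniteDimensional ℂ H4]
    (Q0 : H0 →ₗ[ℂ] H4 →ₗ[ℂ] ℂ) (Q1 : H1 →ₗ[ℂ] H3 →ₗ[ℂ] ℂ)
    (Q2 : H2 →ₗ[ℂ] H2 →ₗ[ℂ] ℂ)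
    (hQ0l : ∀ u, (∀ v, Q0 u v = 0) → u = 0)
    (hQ0r : ∀ v, (∀ u, Q0 u v = 0) → v = 0)
    (hQ1l : ∀ u, (∀ v, Q1 u v = 0) → u = 0)
    (hQ1r : ∀ v, (∀ u, Q1 u v = 0) → v = 0)
    (hQ2l : ∀ u, (∀ v, Q2 u v = 0) → u = 0)
    (hQ2sym : ∀ u v, Q2 u v = Q2 v u)
    -- `dim H₀ = 1` with generator `ω`
    (ω : H0) (hω : ω ≠ 0) (hH0 : finrank ℂ H0 = 1)
    -- `T` is a space of infinitesimal variations `θ = (θ₀, θ₁, θ₂, θ₃)`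
    (T : Submodule ℂ ((H0 →ₗ[ℂ] H1) × (H1 →ₗ[ℂ] H2) × (H2 →ₗ[ℂ] H3) × (H3 →ₗ[ℂ] H4)))
    (hvar : ∀ θ ∈ T,
      (∀ u v, Q1 (θ.1 u) v + Q0 u (θ.2.2.2 v) = 0) ∧
      (∀ u v, Q2 (θ.2.1 u) v + Q1 u (θ.2.2.1 v) = 0))
    (hcomm : ∀ θ ∈ T, ∀ ψ ∈ T,
      (∀ u, θ.2.1 (ψ.1 u) = ψ.2.1 (θ.1 u)) ∧
      (∀ u, θ.2.2.1 (ψ.2.1 u) = ψ.2.2.1 (θ.2.1 u)) ∧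
      (∀ u, θ.2.2.2 (ψ.2.2.1 u) = ψ.2.2.2 (θ.2.2.1 u)))
    -- the map `θ ↦ θ₀ ω` is an isomorphism `T → H₁`
    (hbij : Function.Bijective (fun θ : ↥T => (θ : (H0 →ₗ[ℂ] H1) × (H1 →ₗ[ℂ] H2) ×
      (H2 →ₗ[ℂ] H3) × (H3 →ₗ[ℂ] H4)).1 ω))
    (ζ : H2)
    -- `T_ζ = { θ ∈ T : θ₂ ζ = 0 }`
    (Tζ : Submodule ℂ ((H0 →ₗ[ℂ] H1) × (H1 →ₗ[ℂ] H2) × (H2 →ₗ[ℂ] H3) × (H3 →ₗ[ℂ] H4)))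
    (hTζ : ∀ θ, θ ∈ Tζ ↔ θ ∈ T ∧ θ.2.2.1 ζ = 0)
    -- `L` is the linear map `T → T*` associated to the bilinear form `Q_ζ`
    (L : ↥T →ₗ[ℂ] (↥T →ₗ[ℂ] ℂ))
    (hL : ∀ θ θ' : ↥T, L θ θ' =
      Q2 ((θ : (H0 →ₗ[ℂ] H1) × (H1 →ₗ[ℂ] H2) × (H2 →ₗ[ℂ] H3) × (H3 →ₗ[ℂ] H4)).2.1
        (((θ' : (H0 →ₗ[ℂ] H1) × (H1 →ₗ[ℂ] H2) × (H2 →ₗ[ℂ] H3) × (H3 →ₗ[ℂ] H4)).1) ω)) ζ) :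
    (∀ θ θ' : ↥T, L θ θ' = L θ' θ) ∧
      finrank ℂ ↥T = finrank ℂ ↥Tζ + finrank ℂ ↥(LinearMap.range L) :=
  calabi_yau_fourfold_rank_general H0 H1 H2 H3 H4 Q0 Q1 Q2 hQ1r ω T hvar hcomm hbij ζ Tζ hTζ L hL
end
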